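/- arXiv:1805.09020 — 2 statements merged into one kernel-verified Lean document; each statement's English description precedes it below -/
import Mathlib

section
/- Fix 0 ≤ k ≤ n and let V_k = {[[a,c],[0,ᵀa]] ∈ M_{2n}(k) : a upper triangular, ᵀc = c, cᵢᵢ = 0 for all i > k}. Then V_k is stable under conjugation by B: for every b ∈ B and x ∈ V_k, b·x·b⁻¹ ∈ V_k. In particular every B-conjugate of an element of 𝔱 + 𝔇_k lies in V_k, i.e. ⋃_{b ∈ B} b·(𝔱 + 𝔇_k)·b⁻¹ ⊆ V_k. -/
open Matrix

/-- The Gram matrix `J = [[0, 1ₙ], [1ₙ, 0]]` of the symplectic form. -/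
def Jsp (k : Type*) [Field k] (n : ℕ) : Matrix (Fin n ⊕ Fin n) (Fin n ⊕ Fin n) k :=
  Matrix.fromBlocks 0 1 1 0

/-- The element `diag(t₁,…,tₙ,t₁,…,tₙ)` of `𝔱`. -/
def tDiag (k : Type*) [Field k] (n : ℕ) (t : Fin n → k) :
    Matrix (Fin n ⊕ Fin n) (Fin n ⊕ Fin n) k :=
  Matrix.fromBlocks (Matrix.diagonal t) 0 0 (Matrix.diagonal t)

/-- The element `[[0, diag d],[0,0]]` of `𝔇`. -/
def dMat (k : Type*) [Field k] (n : ℕ) (d : Fin n → k) :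
    Matrix (Fin n ⊕ Fin n) (Fin n ⊕ Fin n) k :=
  Matrix.fromBlocks 0 (Matrix.diagonal d) 0 0

/-- The set `V_m = {[[a,c],[0,aᵀ]] : a upper triangular, cᵀ = c, cᵢᵢ = 0 for i > m}`
(`i` runs through `1,…,n`; in 0-based indexing the diagonal condition reads
`m ≤ i → c i i = 0`). -/
def Vset (k : Type*) [Field k] (n m : ℕ) :
    Set (Matrix (Fin n ⊕ Fin n) (Fin n ⊕ Fin n) k) :=
  {x | ∃ a c : Matrix (Fin n) (Fin n) k,
    (∀ i j : Fin n, (j : ℕ) < (i : ℕ) → a i j = 0) ∧ cᵀ = c ∧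
    (∀ i : Fin n, m ≤ (i : ℕ) → c i i = 0) ∧
    x = Matrix.fromBlocks a c 0 aᵀ}

section aux
variable {k : Type} [Field k] [CharP k 2] {n : ℕ}

lemma sym_double_sum (f : Fin n → Fin n → k) (hf : ∀ j l, f j l = f l j) :
    ∑ j, ∑ l, f j l = ∑ j, f j j := by
  classical
  have h0 : ∑ p : Fin n × Fin n, (if p.1 = p.2 then (0:k) else f p.1 p.2) = 0 := by
    apply Finset.sum_ninvolution Prod.swap
    · intro a
      rcases eq_or_ne a.1 a.2 with h | h
      · simp [h]
      · simp only [Prod.fst_swap, Prod.snd_swap, if_neg h, if_neg (Ne.symm h)]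
        rw [hf a.2 a.1]
        exact CharTwo.add_self_eq_zero _
    · intro a ha hsw
      apply ha
      have h1 : a.2 = a.1 := congrArg Prod.fst hsw
      simp [h1]
    · intro a; exact Finset.mem_univ _
    · intro a; exact Prod.swap_swap a
  have hsplit : ∀ j l : Fin n,
      f j l = (if j = l then (0:k) else f j l) + (if j = l then f j j else 0) := by
    intro j l
    rcases eq_or_ne j l with h | h
    · subst h; simp
    · simp [h]
  calc ∑ j, ∑ l, f j l
      = ∑ j, ∑ l, ((if j = l then (0:k) else f j l) + (if j = l then f j j else 0)) := by
        exact Finset.sum_congr rfl fun j _ => Finset.sum_congr rfl fun l _ => hsplit j l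
    _ = (∑ j, ∑ l, (if j = l then (0:k) else f j l))
        + ∑ j, ∑ l, (if j = l then f j j else 0) := by
        simp [Finset.sum_add_distrib]
    _ = ∑ j, f j j := by
        have h1 : (∑ j, ∑ l, (if j = l then (0:k) else f j l)) = 0 := by
          rw [← Finset.sum_product' (f := fun j l => if j = l then (0:k) else f j l)]
          rw [← Finset.univ_product_univ] at h0
          exact h0
        rw [h1, zero_add]
        simp

lemma matrix_add_self (X : Matrix (Fin n) (Fin n) k) : X + X = 0 := by
  ext i j; exact CharTwo.add_self_eq_zero _

lemma conj_mem (m : ℕ) (b : Matrix (Fin n ⊕ Fin n) (Fin n ⊕ Fin n) k)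
    (hsymp : bᵀ * Jsp k n * b = Jsp k n)
    (hblock : ∃ p q r : Matrix (Fin n) (Fin n) k,
      (∀ i j : Fin n, (j : ℕ) < (i : ℕ) → p i j = 0) ∧ b = Matrix.fromBlocks p q 0 r)
    (x : Matrix (Fin n ⊕ Fin n) (Fin n ⊕ Fin n) k) (hx : x ∈ Vset k n m) :
    b * x * b⁻¹ ∈ Vset k n m := by
  classical
  obtain ⟨p, q, r, hp, rfl⟩ := hblock
  obtain ⟨a, c, ha, hc, hcd, rfl⟩ := hx
  -- extract block relations from the symplectic condition
  rw [Jsp, fromBlocks_transpose] at hsymp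
  rw [fromBlocks_multiply, fromBlocks_multiply] at hsymp
  rw [fromBlocks_inj] at hsymp
  obtain ⟨h11, h12, h21, h22⟩ := hsymp
  simp only [Matrix.mul_zero, Matrix.zero_mul, Matrix.mul_one, Matrix.one_mul,
    Matrix.transpose_zero, zero_add, add_zero] at h11 h12 h21 h22
  -- h12 : pᵀ * r = 1, h21 : rᵀ * p = 1, h22 : rᵀ * q + qᵀ * r = 0
  have hprT : p * rᵀ = 1 := mul_eq_one_comm.mp h21
  haveI : Invertible p := invertibleOfRightInverse _ _ hprT
  have hpinv : p⁻¹ = rᵀ := Matrix.inv_eq_right_inv hprT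
  have hrT : r = (p⁻¹)ᵀ := by rw [hpinv, transpose_transpose]
  set s : Matrix (Fin n) (Fin n) k := p⁻¹ * q with hs_def
  have hq : q = p * s := by rw [hs_def, Matrix.mul_inv_cancel_left_of_invertible]
  have hs : sᵀ = s := by
    have h22' : qᵀ * r = rᵀ * q := by
      calc qᵀ * r = -(rᵀ * q) := eq_neg_of_add_eq_zero_right h22
        _ = rᵀ * q := by ext i j; exact CharTwo.neg_eq _
    rw [hs_def, transpose_mul, hpinv, transpose_transpose]
    exact h22' 
  set M : Matrix (Fin n) (Fin n) k := a * s + c + s * aᵀ with hM_def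
  set A : Matrix (Fin n) (Fin n) k := p * a * p⁻¹ with hA_def
  set C : Matrix (Fin n) (Fin n) k := p * M * pᵀ with hC_def
  have hMs : Mᵀ = M := by
    rw [hM_def]
    simp only [transpose_add, transpose_mul, transpose_transpose, hs, hc]
    abel
  -- inverse of b
  have hbinv : (fromBlocks p q 0 r)⁻¹ = fromBlocks p⁻¹ (p⁻¹ * q * pᵀ) 0 pᵀ := by
    apply Matrix.inv_eq_right_inv
    rw [fromBlocks_multiply]
    have h1 : p * p⁻¹ + q * 0 = 1 := by
      simp [Matrix.mul_inv_of_invertible]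
    have h2 : p * (p⁻¹ * q * pᵀ) + q * pᵀ = 0 := by
      rw [← Matrix.mul_assoc, ← Matrix.mul_assoc, Matrix.mul_inv_of_invertible,
        Matrix.one_mul]
      exact matrix_add_self _
    have h3 : (0 : Matrix (Fin n) (Fin n) k) * p⁻¹ + r * 0 = 0 := by simp
    have h4 : (0 : Matrix (Fin n) (Fin n) k) * (p⁻¹ * q * pᵀ) + r * pᵀ = 1 := by
      rw [Matrix.zero_mul, zero_add, hrT, ← transpose_mul, Matrix.mul_inv_of_invertible,
        transpose_one]
    rw [h1, h2, h3, h4]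
    exact fromBlocks_one
  -- the conjugate
  have hconj : fromBlocks p q 0 r * fromBlocks a c 0 aᵀ * (fromBlocks p q 0 r)⁻¹
      = fromBlocks A C 0 Aᵀ := by
    rw [hbinv, fromBlocks_multiply, fromBlocks_multiply, fromBlocks_inj]
    refine ⟨?_, ?_, ?_, ?_⟩
    · simp [hA_def, Matrix.mul_assoc]
    · -- top right
      rw [hC_def, hM_def, hq]
      simp only [Matrix.mul_zero, Matrix.zero_mul, add_zero, zero_add]
      simp only [Matrix.mul_add, Matrix.add_mul, Matrix.mul_assoc,
        Matrix.inv_mul_cancel_left_of_invertible]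
      abel
    · simp
    · -- bottom right
      simp only [Matrix.zero_mul, zero_add, Matrix.mul_zero, add_zero]
      rw [hA_def, transpose_mul, transpose_mul, hrT]
      simp [Matrix.mul_assoc]
  rw [hconj]
  refine ⟨A, C, ?_, ?_, ?_, rfl⟩
  · -- A upper triangular
    have hp' : BlockTriangular p (id : Fin n → Fin n) := fun i j h => hp i j h
    have ha' : BlockTriangular a (id : Fin n → Fin n) := fun i j h => ha i j h
    have hpinv' : BlockTriangular p⁻¹ (id : Fin n → Fin n) :=
      Matrix.blockTriangular_inv_of_blockTriangular hp'
    have hA' := (hp'.mul ha').mul hpinv'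
    intro i j h
    exact hA' (show (id j : Fin n) < id i from h)
  · -- C symmetric
    rw [hC_def, transpose_mul, transpose_mul, transpose_transpose, hMs, Matrix.mul_assoc]
  · -- diagonal vanishing
    intro i hi
    have hMd : ∀ j : Fin n, M j j = c j j := by
      intro j
      rw [hM_def]
      simp only [Matrix.add_apply, Matrix.mul_apply]
      have hz : (∑ l, a j l * s l j) + (∑ l, s j l * aᵀ l j) = 0 := by
        rw [← Finset.sum_add_distrib]
        apply Finset.sum_eq_zero
        intro l _
        have hsjl : s l j = s j l := by
          have h := congrFun (congrFun hs l) j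
          rw [Matrix.transpose_apply] at h
          exact h.symm
        rw [transpose_apply, hsjl, mul_comm (s j l) (a j l)]
        exact CharTwo.add_self_eq_zero _
      rw [add_right_comm, hz, zero_add]
    have hCval : C i i = ∑ j, p i j * M j j * p i j := by
      rw [hC_def]
      have e1 : (p * M * pᵀ) i i = ∑ l, (∑ j, p i j * M j l) * p i l := by
        simp [Matrix.mul_apply]
      rw [e1]
      have e2 : ∑ l, (∑ j, p i j * M j l) * p i l = ∑ l, ∑ j, p i j * M j l * p i l := by
        apply Finset.sum_congr rfl
        intro l _
        rw [Finset.sum_mul]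
      rw [e2]
      have hMsym : ∀ j l : Fin n, M j l = M l j := by
        intro j l
        have h := congrFun (congrFun hMs j) l
        rw [Matrix.transpose_apply] at h
        exact h.symm
      exact sym_double_sum (fun l j => p i j * M j l * p i l)
        (fun x y => by
          show p i y * M y x * p i x = p i x * M x y * p i y
          rw [hMsym y x]; ring)
    rw [hCval]
    apply Finset.sum_eq_zero
    intro j _
    rcases lt_or_ge (j : ℕ) (i : ℕ) with h | h
    · rw [hp i j h]; ring
    · rw [hMd j, hcd j (le_trans hi h)]; ring

end aux

/-- For `0 ≤ m ≤ n` the set `V_m` is stable under conjugation by the Borel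
subgroup `B` of `Sp_{2n}(k)`; in particular every `B`-conjugate of an element of
`𝔱 + 𝔇_m` lies in `V_m`. -/
theorem stmt_17 (k : Type) [Field k] [IsAlgClosed k] [CharP k 2] (n m : ℕ)
    (hn : 1 ≤ n) (hm : m ≤ n) :
    (∀ b : Matrix (Fin n ⊕ Fin n) (Fin n ⊕ Fin n) k,
      IsUnit b → bᵀ * Jsp k n * b = Jsp k n →
      (∃ p q r : Matrix (Fin n) (Fin n) k,
        (∀ i j : Fin n, (j : ℕ) < (i : ℕ) → p i j = 0) ∧ b = Matrix.fromBlocks p q 0 r) →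
      ∀ x ∈ Vset k n m, b * x * b⁻¹ ∈ Vset k n m) ∧
    (∀ b : Matrix (Fin n ⊕ Fin n) (Fin n ⊕ Fin n) k,
      IsUnit b → bᵀ * Jsp k n * b = Jsp k n →
      (∃ p q r : Matrix (Fin n) (Fin n) k,
        (∀ i j : Fin n, (j : ℕ) < (i : ℕ) → p i j = 0) ∧ b = Matrix.fromBlocks p q 0 r) →
      ∀ (t d : Fin n → k), (∀ i : Fin n, m ≤ (i : ℕ) → d i = 0) →
        b * (tDiag k n t + dMat k n d) * b⁻¹ ∈ Vset k n m) := by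
  constructor
  · intro b _ hsymp hblock x hx
    exact conj_mem m b hsymp hblock x hx
  · intro b _ hsymp hblock t d hd
    apply conj_mem m b hsymp hblock
    refine ⟨Matrix.diagonal t, Matrix.diagonal d, ?_, ?_, ?_, ?_⟩
    · intro i j h
      have hne : i ≠ j := fun he => by subst he; exact absurd h (lt_irrefl _)
      exact Matrix.diagonal_apply_ne t hne
    · exact Matrix.diagonal_transpose d
    · intro i hi
      rw [Matrix.diagonal_apply_eq]
      exact hd i hi
    · rw [tDiag, dMat, Matrix.fromBlocks_add, Matrix.diagonal_transpose]
      simp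
end

section
/- Fix 0 ≤ k ≤ n. Let s ∈ 𝔱_sr and z = [[0,d],[0,0]] ∈ 𝔇. Then s + z is Sp_{2n}(k)-conjugate to an element of 𝔱_sr + 𝔇_k if and only if there exists a permutation w ∈ Sₙ such that ẇ·(s+z)·ẇ⁻¹ ∈ 𝔱_sr + 𝔇_k, where ẇ = [[P_w,0],[0,P_w]] ∈ Sp_{2n}(k) and P_w is the permutation matrix of w; equivalently, if and only if the number of indices i with dᵢᵢ ≠ 0 is at most k. In particular, Y_k ∩ (𝔱_sr + 𝔇) = ⋃_{w ∈ Sₙ} ẇ·(𝔱_sr + 𝔇_k)·ẇ⁻¹, where Y_k = ⋃_{g ∈ Sp_{2n}(k)} g·(𝔱_sr + 𝔇_k)·g⁻¹. -/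
/-! With `P = ∏ (X - tᵢ)`, the element `x = s + z` behaves like the tuple of dual numbers
`tᵢ + dᵢ ε`, so `P(x) = [[0, diag(dᵢ P'(tᵢ))], [0, 0]]`; as the `tᵢ` are distinct, `P'(tᵢ) ≠ 0`
and the rank of `P(x)` is `#{i : dᵢ ≠ 0}`. This rank is a conjugacy invariant. A conjugate
`s' + z'` of `x` has the same characteristic polynomial `P²`, so `P` vanishes at the entries of
`s'` and the same computation bounds the rank by the number of nonzero entries of `z'`, which is
at most `m` in `𝔱_sr + 𝔇_m`. Conversely, a permutation `ẇ` moving the nonzero `dᵢ` into the first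
`m` slots conjugates `x` into `𝔱_sr + 𝔇_m`. -/

open Matrix

/-- The subset `𝔱_sr + 𝔇_m` of `M_{2n}(k)`: sums `s′ + z′` with `s′ = diag(t′,t′)` for `t′`
with pairwise distinct entries and `z′ = [[0, diag d′],[0,0]]` with `d′ᵢ = 0` for `i > m`
(0-based: `m ≤ i`). -/
def TDset (k : Type*) [Field k] (n m : ℕ) :
    Set (Matrix (Fin n ⊕ Fin n) (Fin n ⊕ Fin n) k) :=
  {x | ∃ t' d' : Fin n → k, Function.Injective t' ∧
    (∀ i : Fin n, m ≤ (i : ℕ) → d' i = 0) ∧ x = tDiag k n t' + dMat k n d'}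

/-- The element `ẇ = [[P_w, 0],[0, P_w]] ∈ Sp_{2n}(k)` for a permutation `w ∈ Sₙ`. -/
def wMat (k : Type*) [Field k] (n : ℕ) (w : Equiv.Perm (Fin n)) :
    Matrix (Fin n ⊕ Fin n) (Fin n ⊕ Fin n) k :=
  Matrix.fromBlocks (w.permMatrix k) 0 0 (w.permMatrix k)

open Polynomial

theorem Polynomial.aeval_units_conj {R A : Type*} [CommSemiring R] [Semiring A] [Algebra R A]
    (u : Aˣ) (x : A) (p : R[X]) : aeval (↑u * x * ↑u⁻¹) p = ↑u * aeval x p * ↑u⁻¹ := by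
  simpa [ConjAct.units_smul_def] using
    aeval_algHom_apply (MulSemiringAction.toAlgHom R A (ConjAct.toConjAct u)) x p

theorem IsConj.aeval {R A : Type*} [CommSemiring R] [Semiring A] [Algebra R A] {x y : A}
    (h : IsConj x y) (p : R[X]) : IsConj (aeval x p) (aeval y p) := by
  obtain ⟨u, hu⟩ := h
  have hy : y = ↑u * x * ↑u⁻¹ := (Units.eq_mul_inv_iff_mul_eq u).mpr hu.eq.symm
  exact ⟨u, by rw [SemiconjBy, hy, aeval_units_conj, Units.inv_mul_cancel_right]⟩

namespace Matrix

variable {ι R : Type*} [Fintype ι] [DecidableEq ι] [CommRing R]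

theorem isConj_mul_mul_nonsing_inv {g : Matrix ι ι R} (hg : IsUnit g) (x : Matrix ι ι R) :
    IsConj x (g * x * g⁻¹) := by
  obtain ⟨u, rfl⟩ := hg
  exact ⟨u, by rw [SemiconjBy, ← coe_units_inv, Units.inv_mul_cancel_right]⟩

theorem charpoly_eq_of_isConj {x y : Matrix ι ι R} (h : IsConj x y) :
    x.charpoly = y.charpoly := by
  obtain ⟨u, hu⟩ := h
  rw [(Units.eq_mul_inv_iff_mul_eq u).mpr hu.eq.symm, coe_units_inv, charpoly_units_conj]

theorem rank_eq_of_isConj {x y : Matrix ι ι R} (h : IsConj x y) : x.rank = y.rank := by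
  obtain ⟨u, hu⟩ := h
  have hdet : IsUnit (u : Matrix ι ι R).det := (isUnit_iff_isUnit_det _).mp u.isUnit
  rw [← rank_mul_eq_right_of_isUnit_det _ x hdet, hu.eq, rank_mul_eq_left_of_isUnit_det _ y hdet]

end Matrix

section TDiagDMat

variable {k : Type*} [Field k] {n : ℕ}

theorem tDiag_add_dMat (a b : Fin n → k) :
    tDiag k n a + dMat k n b = fromBlocks (diagonal a) (diagonal b) 0 (diagonal a) := by
  rw [tDiag, dMat, fromBlocks_add, add_zero, zero_add, add_zero]

theorem tDiag_add (a a' : Fin n → k) : tDiag k n (a + a') = tDiag k n a + tDiag k n a' := by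
  simp [tDiag]

theorem dMat_add (b b' : Fin n → k) : dMat k n (b + b') = dMat k n b + dMat k n b' := by
  rw [dMat, dMat, dMat, fromBlocks_add]
  simp

theorem tDiag_add_dMat_mul (a b a' b' : Fin n → k) :
    (tDiag k n a + dMat k n b) * (tDiag k n a' + dMat k n b') =
      tDiag k n (a * a') + dMat k n (a * b' + b * a') := by
  simp [tDiag_add_dMat, fromBlocks_multiply]

theorem algebraMap_eq_tDiag_add_dMat (c : k) :
    algebraMap k (Matrix (Fin n ⊕ Fin n) (Fin n ⊕ Fin n) k) c =
      tDiag k n (fun _ => c) + dMat k n 0 := by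
  rw [tDiag_add_dMat, algebraMap_eq_diagonal]
  ext (i | i) (j | j) <;> simp [diagonal_apply]

theorem aeval_tDiag_add_dMat (a b : Fin n → k) (p : k[X]) :
    aeval (tDiag k n a + dMat k n b) p =
      tDiag k n (fun i => p.eval (a i)) + dMat k n (fun i => b i * p.derivative.eval (a i)) := by
  induction p using Polynomial.induction_on with
  | C c => simp [algebraMap_eq_tDiag_add_dMat, Pi.zero_def]
  | add p q hp hq =>
    simp only [map_add, hp, hq, eval_add, mul_add, ← Pi.add_def, tDiag_add, dMat_add]
    abel
  | monomial j c ih =>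
    rw [pow_succ, ← mul_assoc, map_mul, ih, aeval_X, tDiag_add_dMat_mul]
    congr 2 <;> ext i <;> simp [derivative_mul]
    ring

theorem aeval_tDiag_add_dMat_of_eval_eq_zero (a b : Fin n → k) {p : k[X]}
    (hp : ∀ i, p.eval (a i) = 0) :
    aeval (tDiag k n a + dMat k n b) p = dMat k n (fun i => b i * p.derivative.eval (a i)) := by
  rw [aeval_tDiag_add_dMat, funext hp]
  simp [tDiag]

theorem charpoly_tDiag_add_dMat (a b : Fin n → k) :
    (tDiag k n a + dMat k n b).charpoly = Lagrange.nodal Finset.univ a ^ 2 := by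
  rw [tDiag_add_dMat, charpoly_fromBlocks_zero₂₁, charpoly_diagonal, Lagrange.nodal, sq]

theorem rank_dMat (e : Fin n → k) : (dMat k n e).rank = {i | e i ≠ 0}.ncard := by
  classical
  rw [← rank_submatrix _ (Equiv.refl _) (Equiv.sumComm _ _), dMat]
  have h := fromBlocks_diagonal e (0 : Fin n → k)
  rw [show diagonal (0 : Fin n → k) = 0 from diagonal_zero] at h
  rw [Equiv.coe_refl, Equiv.sumComm_apply, fromBlocks_submatrix_sum_swap_right, h,
    submatrix_id_id, rank_diagonal, Fintype.card_subtype, Set.ncard_eq_toFinset_card']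
  simp [Finset.card_filter, Fintype.sum_sum_type]
  congr

end TDiagDMat

theorem ncard_ne_zero_le_of_forall_le_eq_zero {M : Type*} [Zero M] {n m : ℕ} {f : Fin n → M}
    (hf : ∀ i : Fin n, m ≤ (i : ℕ) → f i = 0) : {i | f i ≠ 0}.ncard ≤ m := by
  calc {i | f i ≠ 0}.ncard ≤ (Finset.range m : Set ℕ).ncard :=
        Set.ncard_le_ncard_of_injOn Fin.val
          (fun i hi => by simpa using not_le.mp (mt (hf i) hi)) Fin.val_injective.injOn
    _ = m := by rw [Set.ncard_coe_finset, Finset.card_range]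

theorem exists_perm_forall_le_eq_zero {M : Type*} [Zero M] {n m : ℕ} {f : Fin n → M}
    (hf : {i | f i ≠ 0}.ncard ≤ m) :
    ∃ w : Equiv.Perm (Fin n), ∀ i : Fin n, m ≤ (i : ℕ) → f (w i) = 0 := by
  set S := {i // f i ≠ 0}
  have hS : Nat.card S ≤ n := (Finite.card_subtype_le _).trans_eq (Nat.card_fin n)
  obtain ⟨σ, hσ⟩ := Equiv.Perm.exists_extending_pair ((↑) : S → Fin n)
    (fun s => Fin.castLE hS (Finite.equivFin S s)) Subtype.val_injective
    (Fin.castLE_injective hS |>.comp (Finite.equivFin S).injective)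
  refine ⟨σ.symm, fun i hi => by_contra fun hne => ?_⟩
  have h := congrArg Fin.val (hσ ⟨σ.symm i, hne⟩)
  rw [Equiv.apply_symm_apply, Fin.val_castLE] at h
  have := (Finite.equivFin S ⟨σ.symm i, hne⟩).2.trans_le hf
  omega

section Conjugacy

variable {k : Type*} [Field k] {n m : ℕ}

theorem eval_derivative_nodal_ne_zero {t : Fin n → k} (ht : Function.Injective t) (i : Fin n) :
    (Lagrange.nodal Finset.univ t).derivative.eval (t i) ≠ 0 := by
  classical
  rw [Lagrange.eval_nodal_derivative_eval_node_eq (Finset.mem_univ i)]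
  exact Lagrange.eval_nodal_not_at_node fun j hj => ht.ne (Finset.ne_of_mem_erase hj).symm

theorem ncard_ne_zero_le_of_isConj_mem_TDset {t d : Fin n → k} (ht : Function.Injective t)
    {y : Matrix (Fin n ⊕ Fin n) (Fin n ⊕ Fin n) k} (hxy : IsConj (tDiag k n t + dMat k n d) y)
    (hy : y ∈ TDset k n m) : {i | d i ≠ 0}.ncard ≤ m := by
  obtain ⟨t', d', -, hd', rfl⟩ := hy
  set P := Lagrange.nodal Finset.univ t
  have hPt : ∀ i, P.eval (t i) = 0 := fun i => Lagrange.eval_nodal_at_node (Finset.mem_univ i)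
  have hPt' : ∀ i, P.eval (t' i) = 0 := by
    intro i
    have h := congrArg (eval (t' i)) (charpoly_eq_of_isConj hxy)
    rw [charpoly_tDiag_add_dMat, charpoly_tDiag_add_dMat, eval_pow, eval_pow,
      Lagrange.eval_nodal_at_node (Finset.mem_univ i), zero_pow two_ne_zero] at h
    exact pow_eq_zero_iff two_ne_zero |>.mp h
  have hrank := rank_eq_of_isConj (hxy.aeval P)
  rw [aeval_tDiag_add_dMat_of_eval_eq_zero _ _ hPt, aeval_tDiag_add_dMat_of_eval_eq_zero _ _ hPt',
    rank_dMat, rank_dMat] at hrank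
  calc {i | d i ≠ 0}.ncard = {i | d i * P.derivative.eval (t i) ≠ 0}.ncard := by
        simp only [ne_eq, mul_eq_zero, eval_derivative_nodal_ne_zero ht, or_false, P]
    _ = {i | d' i * P.derivative.eval (t' i) ≠ 0}.ncard := hrank
    _ ≤ {i | d' i ≠ 0}.ncard := Set.ncard_le_ncard fun i hi => left_ne_zero_of_mul hi
    _ ≤ m := ncard_ne_zero_le_of_forall_le_eq_zero hd'

end Conjugacy

section Weyl

variable {k : Type*} [Field k] {n : ℕ}

theorem wMat_mul_wMat_inv (w : Equiv.Perm (Fin n)) : wMat k n w * wMat k n w⁻¹ = 1 := by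
  simp [wMat, fromBlocks_multiply, ← permMatrix_mul]

theorem inv_wMat (w : Equiv.Perm (Fin n)) : (wMat k n w)⁻¹ = wMat k n w⁻¹ :=
  inv_eq_right_inv (wMat_mul_wMat_inv w)

theorem isUnit_wMat (w : Equiv.Perm (Fin n)) : IsUnit (wMat k n w) :=
  IsUnit.of_mul_eq_one _ (wMat_mul_wMat_inv w)

theorem transpose_wMat_mul_Jsp_mul_wMat (w : Equiv.Perm (Fin n)) :
    (wMat k n w)ᵀ * Jsp k n * wMat k n w = Jsp k n := by
  simp [wMat, Jsp, fromBlocks_transpose, fromBlocks_multiply, ← permMatrix_mul]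

theorem permMatrix_mul_diagonal (w : Equiv.Perm (Fin n)) (a : Fin n → k) :
    w.permMatrix k * diagonal a = diagonal (a ∘ w) * w.permMatrix k := by
  ext i j
  simp only [PEquiv.toMatrix_apply, mul_diagonal, diagonal_mul, Equiv.toPEquiv_apply,
    Option.mem_def, Option.some.injEq, Function.comp_apply]
  split_ifs with h <;> simp [h]

theorem wMat_mul_tDiag_add_dMat_mul_inv (w : Equiv.Perm (Fin n)) (a b : Fin n → k) :
    wMat k n w * (tDiag k n a + dMat k n b) * (wMat k n w)⁻¹ =
      tDiag k n (a ∘ w) + dMat k n (b ∘ w) := by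
  rw [inv_wMat, tDiag_add_dMat, tDiag_add_dMat, wMat, wMat]
  simp [fromBlocks_multiply, permMatrix_mul_diagonal, mul_assoc, ← permMatrix_mul]

end Weyl

theorem exists_wMat_conj_mem_TDset {k : Type*} [Field k] {n m : ℕ} {t d : Fin n → k}
    (ht : Function.Injective t) (hd : {i | d i ≠ 0}.ncard ≤ m) :
    ∃ w : Equiv.Perm (Fin n),
      wMat k n w * (tDiag k n t + dMat k n d) * (wMat k n w)⁻¹ ∈ TDset k n m := by
  obtain ⟨w, hw⟩ := exists_perm_forall_le_eq_zero hd
  exact ⟨w, t ∘ w, d ∘ w, ht.comp w.injective, hw, wMat_mul_tDiag_add_dMat_mul_inv w t d⟩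

theorem stmt_19_general (k : Type) [Field k] (n m : ℕ)
    (t : Fin n → k) (ht : Function.Injective t)
    (d : Fin n → k) :
    ((∃ g : Matrix (Fin n ⊕ Fin n) (Fin n ⊕ Fin n) k,
        IsUnit g ∧ gᵀ * Jsp k n * g = Jsp k n ∧
        g * (tDiag k n t + dMat k n d) * g⁻¹ ∈ TDset k n m) ↔
      ∃ w : Equiv.Perm (Fin n),
        wMat k n w * (tDiag k n t + dMat k n d) * (wMat k n w)⁻¹ ∈ TDset k n m) ∧
    ((∃ w : Equiv.Perm (Fin n),
        wMat k n w * (tDiag k n t + dMat k n d) * (wMat k n w)⁻¹ ∈ TDset k n m) ↔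
      Set.ncard {i : Fin n | d i ≠ 0} ≤ m) ∧
    ({x : Matrix (Fin n ⊕ Fin n) (Fin n ⊕ Fin n) k |
        (∃ g : Matrix (Fin n ⊕ Fin n) (Fin n ⊕ Fin n) k,
          IsUnit g ∧ gᵀ * Jsp k n * g = Jsp k n ∧
          ∃ y ∈ TDset k n m, x = g * y * g⁻¹) ∧
        ∃ t'' d'' : Fin n → k, Function.Injective t'' ∧
          x = tDiag k n t'' + dMat k n d''}
      = {x : Matrix (Fin n ⊕ Fin n) (Fin n ⊕ Fin n) k |
          ∃ (w : Equiv.Perm (Fin n)) (y : Matrix (Fin n ⊕ Fin n) (Fin n ⊕ Fin n) k),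
            y ∈ TDset k n m ∧ x = wMat k n w * y * (wMat k n w)⁻¹}) := by
  refine ⟨⟨fun ⟨g, hg, _, hy⟩ => exists_wMat_conj_mem_TDset ht
      (ncard_ne_zero_le_of_isConj_mem_TDset ht (isConj_mul_mul_nonsing_inv hg _) hy),
    fun ⟨w, hy⟩ => ⟨wMat k n w, isUnit_wMat w, transpose_wMat_mul_Jsp_mul_wMat w, hy⟩⟩,
    ⟨fun ⟨w, hy⟩ => ncard_ne_zero_le_of_isConj_mem_TDset ht
      (isConj_mul_mul_nonsing_inv (isUnit_wMat w) _) hy, exists_wMat_conj_mem_TDset ht⟩, ?_⟩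
  ext x
  constructor
  · rintro ⟨⟨g, hg, -, y, hy, rfl⟩, t', d', ht', hx⟩
    have hconj : IsConj (tDiag k n t' + dMat k n d') y :=
      (hx ▸ isConj_mul_mul_nonsing_inv hg y).symm
    obtain ⟨w, hw⟩ := exists_wMat_conj_mem_TDset ht'
      (ncard_ne_zero_le_of_isConj_mem_TDset ht' hconj hy)
    refine ⟨w⁻¹, _, hw, ?_⟩
    rw [hx, wMat_mul_tDiag_add_dMat_mul_inv, wMat_mul_tDiag_add_dMat_mul_inv]
    simp [Function.comp_def]
  · rintro ⟨w, y, ⟨t', d', ht', hd', rfl⟩, rfl⟩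
    exact ⟨⟨wMat k n w, isUnit_wMat w, transpose_wMat_mul_Jsp_mul_wMat w, _,
        ⟨t', d', ht', hd', rfl⟩, rfl⟩,
      t' ∘ w, d' ∘ w, ht'.comp w.injective, wMat_mul_tDiag_add_dMat_mul_inv w t' d'⟩

/-- For `s ∈ 𝔱_sr` and `z = [[0, diag d],[0,0]] ∈ 𝔇`: the element `s + z` is
`Sp_{2n}(k)`-conjugate to an element of `𝔱_sr + 𝔇_m` iff it is conjugate to one by some
permutation matrix `ẇ`, iff `#{i : dᵢ ≠ 0} ≤ m`.  In particular
`Y_m ∩ (𝔱_sr + 𝔇) = ⋃_{w ∈ Sₙ} ẇ·(𝔱_sr + 𝔇_m)·ẇ⁻¹`. -/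
theorem stmt_19 (k : Type) [Field k] [IsAlgClosed k] [CharP k 2] (n m : ℕ)
    (hn : 1 ≤ n) (hm : m ≤ n) (t : Fin n → k) (ht : Function.Injective t)
    (d : Fin n → k) :
    ((∃ g : Matrix (Fin n ⊕ Fin n) (Fin n ⊕ Fin n) k,
        IsUnit g ∧ gᵀ * Jsp k n * g = Jsp k n ∧
        g * (tDiag k n t + dMat k n d) * g⁻¹ ∈ TDset k n m) ↔
      ∃ w : Equiv.Perm (Fin n),
        wMat k n w * (tDiag k n t + dMat k n d) * (wMat k n w)⁻¹ ∈ TDset k n m) ∧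
    ((∃ w : Equiv.Perm (Fin n),
        wMat k n w * (tDiag k n t + dMat k n d) * (wMat k n w)⁻¹ ∈ TDset k n m) ↔
      Set.ncard {i : Fin n | d i ≠ 0} ≤ m) ∧
    ({x : Matrix (Fin n ⊕ Fin n) (Fin n ⊕ Fin n) k |
        (∃ g : Matrix (Fin n ⊕ Fin n) (Fin n ⊕ Fin n) k,
          IsUnit g ∧ gᵀ * Jsp k n * g = Jsp k n ∧
          ∃ y ∈ TDset k n m, x = g * y * g⁻¹) ∧
        ∃ t'' d'' : Fin n → k, Function.Injective t'' ∧
          x = tDiag k n t'' + dMat k n d''}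
      = {x : Matrix (Fin n ⊕ Fin n) (Fin n ⊕ Fin n) k |
          ∃ (w : Equiv.Perm (Fin n)) (y : Matrix (Fin n ⊕ Fin n) (Fin n ⊕ Fin n) k),
            y ∈ TDset k n m ∧ x = wMat k n w * y * (wMat k n w)⁻¹}) :=
  stmt_19_general k n m t ht d
end
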